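/- arXiv:2603.27140 — 5 statements merged into one kernel-verified Lean document; each statement's English description precedes it below -/
import Mathlib

section
/- Let b ≥ 2 be an integer, d ≥ 1 a natural number, and ℓ, ℓ', m natural numbers with m ≤ d, ℓ ≤ d, ℓ' ≤ d. Fix x in the b-ary d-dimensional hypercube (functions Fin d → Fin b) whose Hamming distance from the all-zero vector equals m. Then the number of y in the hypercube with Hamming distance ℓ' from the all-zero vector and Hamming distance ℓ from x equals the sum, over all natural numbers i such that i + ℓ ≥ m, i + ℓ ≥ ℓ', and 2·i ≤ m + ℓ' − ℓ, of C(m, i) · C(m−i, i+ℓ−ℓ') · C(d−m, i+ℓ−m) · (b−2)^(m+ℓ'−ℓ−2i) · (b−1)^(i+ℓ−m), with the convention 0^0 = 1. -/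
/-!
Relative to the base point `z`, sort the coordinates of `y` into those in the support `S` of `x`
(so `|S| = m`) where `y` keeps the value of `x` (`A`), those in `S` where `y` drops to `z` (`Z`),
and those outside `S` where `y` leaves `z` (`K`). Then `d(y, z) = m - |Z| + |K|` and
`d(x, y) = m - |A| + |K|`, and the vectors with a given profile `(A, Z, K)` are exactly those
taking any of the `b - 2` values other than `x j, z` on `S \ (A ∪ Z)` and any of the `b - 1`
nonzero values on `K`. Summing over profiles by the sizes of their parts, with `i = |A|` the two
distance constraints force `|K| = i + ℓ - m` and `|Z| = i + ℓ - ℓ'`.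
-/

open Finset

lemma card_filter_or_of_disjoint {ι : Type*} [Fintype ι] [DecidableEq ι] {p q : ι → Prop}
    [DecidablePred p] [DecidablePred q] (h : ∀ j, p j → ¬ q j) :
    #{j | p j ∨ q j} = #{j | p j} + #{j | q j} := by
  rw [filter_or, card_union_of_disjoint (disjoint_filter.2 fun j _ => h j)]

section HammingProfile

variable {ι α : Type*} [Fintype ι] [DecidableEq α]

def neCoords (x : ι → α) (z : α) : Finset ι := {j | x j ≠ z}

def keptCoords (x : ι → α) (z : α) (y : ι → α) : Finset ι := {j | x j ≠ z ∧ y j = x j}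

def zeroedCoords (x : ι → α) (z : α) (y : ι → α) : Finset ι := {j | x j ≠ z ∧ y j = z}

def freshCoords (x : ι → α) (z : α) (y : ι → α) : Finset ι := {j | x j = z ∧ y j ≠ z}

def hammingProfile (x : ι → α) (z : α) (y : ι → α) : Finset ι × Finset ι × Finset ι :=
  (keptCoords x z y, zeroedCoords x z y, freshCoords x z y)

variable (x : ι → α) (z : α)

lemma keptCoords_subset (y : ι → α) : keptCoords x z y ⊆ neCoords x z := by
  intro j
  simp +contextual [keptCoords, neCoords]

variable [DecidableEq ι]

lemma zeroedCoords_subset (y : ι → α) :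
    zeroedCoords x z y ⊆ neCoords x z \ keptCoords x z y := by
  intro j
  simp only [keptCoords, zeroedCoords, neCoords, mem_sdiff, mem_filter, mem_univ, true_and]
  grind

lemma freshCoords_subset (y : ι → α) : freshCoords x z y ⊆ (neCoords x z)ᶜ := by
  intro j
  simp +contextual [freshCoords, neCoords]

-- In this and the next identity both sides count `{j | x j ≠ z ∨ y j ≠ z}` as a disjoint union.
lemma hammingDist_const_add_card_zeroedCoords (y : ι → α) :
    hammingDist y (fun _ => z) + #(zeroedCoords x z y) =
      hammingDist x (fun _ => z) + #(freshCoords x z y) := by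
  rw [hammingDist, hammingDist, zeroedCoords, freshCoords, ← card_filter_or_of_disjoint (by grind),
    ← card_filter_or_of_disjoint (by grind)]
  congr 1
  ext j
  simp only [mem_filter, mem_univ, true_and]
  tauto

lemma hammingDist_add_card_keptCoords (y : ι → α) :
    hammingDist x y + #(keptCoords x z y) =
      hammingDist x (fun _ => z) + #(freshCoords x z y) := by
  rw [hammingDist, hammingDist, keptCoords, freshCoords, ← card_filter_or_of_disjoint (by grind),
    ← card_filter_or_of_disjoint (by grind)]
  congr 1
  ext j
  simp only [mem_filter, mem_univ, true_and]
  grind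

variable [Fintype α]

lemma filter_hammingProfile_eq_piFinset {A Z K : Finset ι} (hA : A ⊆ neCoords x z)
    (hZ : Z ⊆ neCoords x z \ A) (hK : K ⊆ (neCoords x z)ᶜ) :
    ({y | hammingProfile x z y = (A, Z, K)} : Finset (ι → α)) = Fintype.piFinset fun j =>
      if j ∈ A then {x j} else if j ∈ Z then {z} else if j ∈ K then univ.erase z
      else if x j ≠ z then (univ.erase z).erase (x j) else {z} := by
  ext y
  simp only [hammingProfile, keptCoords, zeroedCoords, freshCoords, Prod.mk.injEq,
    Finset.ext_iff, mem_filter, mem_univ, true_and, Fintype.mem_piFinset, ← forall_and]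
  refine forall_congr' fun j => ?_
  have hA := @hA j
  have hZ := @hZ j
  have hK := @hK j
  simp only [neCoords, mem_filter, mem_univ, true_and, mem_sdiff, mem_compl] at hA hZ hK
  split_ifs <;> simp only [mem_singleton, mem_erase, mem_univ, and_true] <;> grind

lemma card_filter_hammingProfile_eq {A Z K : Finset ι} (hA : A ⊆ neCoords x z)
    (hZ : Z ⊆ neCoords x z \ A) (hK : K ⊆ (neCoords x z)ᶜ) :
    #{y | hammingProfile x z y = (A, Z, K)} =
      (Fintype.card α - 2) ^ #((neCoords x z \ A) \ Z) * (Fintype.card α - 1) ^ #K := by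
  rw [filter_hammingProfile_eq_piFinset x z hA hZ hK, Fintype.card_piFinset]
  calc _ = ∏ j, (if j ∈ (neCoords x z \ A) \ Z then Fintype.card α - 2 else 1) *
        (if j ∈ K then Fintype.card α - 1 else 1) := by
        refine prod_congr rfl fun j _ => ?_
        have hA := @hA j
        have hZ := @hZ j
        have hK := @hK j
        simp only [neCoords, mem_filter, mem_univ, true_and, mem_sdiff, mem_compl] at hA hZ hK ⊢
        split_ifs <;> grind
    _ = _ := by
        rw [prod_mul_distrib, Fintype.prod_ite_mem, Fintype.prod_ite_mem, prod_const, prod_const]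

lemma sum_hammingProfile {M : Type*} [AddCommMonoid M]
    (f : Finset ι → Finset ι → Finset ι → M) :
    ∑ y, f (keptCoords x z y) (zeroedCoords x z y) (freshCoords x z y) =
      ∑ A ∈ (neCoords x z).powerset, ∑ Z ∈ (neCoords x z \ A).powerset,
        ∑ K ∈ (neCoords x z)ᶜ.powerset, #{y | hammingProfile x z y = (A, Z, K)} • f A Z K := by
  have hcollapse : ∀ y, f (keptCoords x z y) (zeroedCoords x z y) (freshCoords x z y) =
      ∑ A ∈ (neCoords x z).powerset, ∑ Z ∈ (neCoords x z \ A).powerset,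
        ∑ K ∈ (neCoords x z)ᶜ.powerset, if hammingProfile x z y = (A, Z, K) then f A Z K else 0 := by
    intro y
    simp only [hammingProfile, Prod.mk.injEq, ite_and, sum_ite_irrel, sum_const_zero, sum_ite_eq,
      mem_powerset, keptCoords_subset, zeroedCoords_subset, freshCoords_subset, if_true]
  simp only [hcollapse, card_eq_sum_ones, sum_filter, sum_smul, ite_smul, one_smul, zero_smul]
  rw [sum_comm]
  refine sum_congr rfl fun A _ => ?_
  rw [sum_comm]
  refine sum_congr rfl fun Z _ => ?_
  rw [sum_comm]

lemma sum_card_hammingProfile {M : Type*} [AddCommMonoid M] {m : ℕ}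
    (hm : hammingDist x (fun _ => z) = m) (f : ℕ → ℕ → ℕ → M) :
    ∑ y, f #(keptCoords x z y) #(zeroedCoords x z y) #(freshCoords x z y) =
      ∑ a ∈ range (m + 1), ∑ q ∈ range (m - a + 1), ∑ k ∈ range (Fintype.card ι - m + 1),
        (m.choose a * (m - a).choose q * (Fintype.card ι - m).choose k *
          (Fintype.card α - 2) ^ (m - a - q) * (Fintype.card α - 1) ^ k) • f a q k := by
  have hS : #(neCoords x z) = m := hm
  set S := neCoords x z
  calc _ = ∑ A ∈ S.powerset, ∑ Z ∈ (S \ A).powerset, ∑ K ∈ Sᶜ.powerset,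
        ((Fintype.card α - 2) ^ (m - #A - #Z) * (Fintype.card α - 1) ^ #K) • f #A #Z #K := by
        rw [sum_hammingProfile x z fun A Z K => f #A #Z #K]
        refine sum_congr rfl fun A hA => sum_congr rfl fun Z hZ => sum_congr rfl fun K hK => ?_
        rw [mem_powerset] at hA hZ hK
        rw [card_filter_hammingProfile_eq x z hA hZ hK, card_sdiff_of_subset hZ,
          card_sdiff_of_subset hA, hS]
    _ = ∑ A ∈ S.powerset, ∑ Z ∈ (S \ A).powerset, ∑ k ∈ range (Fintype.card ι - m + 1),
        (Fintype.card ι - m).choose k •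
          ((Fintype.card α - 2) ^ (m - #A - #Z) * (Fintype.card α - 1) ^ k) • f #A #Z k := by
        refine sum_congr rfl fun A _ => sum_congr rfl fun Z _ => ?_
        rw [sum_powerset_apply_card (fun k => ((Fintype.card α - 2) ^ (m - #A - #Z) *
          (Fintype.card α - 1) ^ k) • f #A #Z k), card_compl, hS]
    _ = ∑ A ∈ S.powerset, ∑ q ∈ range (m - #A + 1), (m - #A).choose q •
        ∑ k ∈ range (Fintype.card ι - m + 1), (Fintype.card ι - m).choose k •
          ((Fintype.card α - 2) ^ (m - #A - q) * (Fintype.card α - 1) ^ k) • f #A q k := by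
        refine sum_congr rfl fun A hA => ?_
        rw [sum_powerset_apply_card (fun q => ∑ k ∈ range (Fintype.card ι - m + 1),
          (Fintype.card ι - m).choose k • ((Fintype.card α - 2) ^ (m - #A - q) *
            (Fintype.card α - 1) ^ k) • f #A q k), card_sdiff_of_subset (mem_powerset.1 hA), hS]
    _ = _ := by
        rw [sum_powerset_apply_card (fun a => ∑ q ∈ range (m - a + 1), (m - a).choose q •
          ∑ k ∈ range (Fintype.card ι - m + 1), (Fintype.card ι - m).choose k •
            ((Fintype.card α - 2) ^ (m - a - q) * (Fintype.card α - 1) ^ k) • f a q k), hS]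
        simp only [smul_sum, smul_smul, mul_assoc]

end HammingProfile

lemma sum_sum_choose_mul_ite_eq {a m n b ℓ ℓ' : ℕ} (ha : a ≤ m) :
    ∑ q ∈ range (m - a + 1), ∑ k ∈ range (n + 1),
      (m.choose a * (m - a).choose q * n.choose k * (b - 2) ^ (m - a - q) * (b - 1) ^ k) •
        (if ℓ' + q = m + k ∧ ℓ + a = m + k then 1 else 0) =
      if m ≤ a + ℓ ∧ ℓ' ≤ a + ℓ ∧ 2 * a + ℓ ≤ m + ℓ' then
        m.choose a * (m - a).choose (a + ℓ - ℓ') * n.choose (a + ℓ - m) *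
          (b - 2) ^ (m + ℓ' - ℓ - 2 * a) * (b - 1) ^ (a + ℓ - m)
      else 0 := by
  by_cases h : m ≤ a + ℓ ∧ ℓ' ≤ a + ℓ
  · have hc : ∀ q k, (ℓ' + q = m + k ∧ ℓ + a = m + k) ↔ (q = a + ℓ - ℓ' ∧ k = a + ℓ - m) := by
      omega
    simp only [hc, ite_and, smul_eq_mul, mul_ite, mul_one, mul_zero, sum_ite_irrel, sum_const_zero,
      sum_ite_eq', mem_range]
    rw [if_pos h.1, if_pos h.2, show m - a - (a + ℓ - ℓ') = m + ℓ' - ℓ - 2 * a by omega]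
    simp only [show a + ℓ - ℓ' < m - a + 1 ↔ 2 * a + ℓ ≤ m + ℓ' by omega]
    split_ifs with _ hn
    · rfl
    · simp [Nat.choose_eq_zero_of_lt (Nat.lt_of_succ_le (not_lt.1 hn))]
    · rfl
  · rw [if_neg (by omega)]
    exact sum_eq_zero fun q _ => sum_eq_zero fun k _ => by rw [if_neg (by omega), smul_zero]

theorem card_filter_hammingDist_eq_sum {ι α : Type*} [Fintype ι] [DecidableEq ι] [Fintype α]
    [DecidableEq α] (x : ι → α) (z : α) {m : ℕ} (hm : hammingDist x (fun _ => z) = m)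
    (ℓ ℓ' : ℕ) :
    #{y | hammingDist y (fun _ => z) = ℓ' ∧ hammingDist x y = ℓ} =
      ∑ i ∈ range (m + 1),
        if m ≤ i + ℓ ∧ ℓ' ≤ i + ℓ ∧ 2 * i + ℓ ≤ m + ℓ' then
          m.choose i * (m - i).choose (i + ℓ - ℓ') * (Fintype.card ι - m).choose (i + ℓ - m) *
            (Fintype.card α - 2) ^ (m + ℓ' - ℓ - 2 * i) * (Fintype.card α - 1) ^ (i + ℓ - m)
        else 0 := by
  have hdist : ∀ y, (hammingDist y (fun _ => z) = ℓ' ∧ hammingDist x y = ℓ) ↔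
      (ℓ' + #(zeroedCoords x z y) = m + #(freshCoords x z y) ∧
        ℓ + #(keptCoords x z y) = m + #(freshCoords x z y)) := by
    intro y
    have := hammingDist_const_add_card_zeroedCoords x z y
    have := hammingDist_add_card_keptCoords x z y
    omega
  rw [card_filter]
  simp only [hdist]
  rw [sum_card_hammingProfile x z hm fun a q k => if ℓ' + q = m + k ∧ ℓ + a = m + k then 1 else 0]
  exact sum_congr rfl fun a ha => sum_sum_choose_mul_ite_eq (Nat.lt_succ_iff.1 (mem_range.1 ha))

/-- Counting vertices of the `b`-ary `d`-dimensional hypercube at prescribed Hamming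
distances: if `x` is at Hamming distance `m` from the all-zero vector, the number of `y`
at distance `ℓ'` from the all-zero vector and distance `ℓ` from `x` is given by an
explicit sum of products of binomial coefficients and powers of `b−2` and `b−1`. -/
theorem hypercube_count_at_distances (b d : ℕ) (hb : 2 ≤ b)
    (ℓ ℓ' m : ℕ)
    (x : Fin d → Fin b)
    (hx : hammingDist x (fun _ => (⟨0, by omega⟩ : Fin b)) = m) :
    {y : Fin d → Fin b |
        hammingDist y (fun _ => (⟨0, by omega⟩ : Fin b)) = ℓ' ∧
          hammingDist x y = ℓ}.ncard =
      ∑ i ∈ Finset.range (m + 1),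
        if m ≤ i + ℓ ∧ ℓ' ≤ i + ℓ ∧ 2 * i + ℓ ≤ m + ℓ' then
          m.choose i * (m - i).choose (i + ℓ - ℓ') * (d - m).choose (i + ℓ - m) *
            (b - 2) ^ (m + ℓ' - ℓ - 2 * i) * (b - 1) ^ (i + ℓ - m)
        else 0 := by
  rw [← coe_filter_univ, Set.ncard_coe_finset, card_filter_hammingDist_eq_sum x _ hx,
    Fintype.card_fin, Fintype.card_fin]
end

section
/- There exist constants L₂ > 0, L₃ > 0 and C > 0 with the following property. Let ρ : ℕ → ℝ be any function with ρ(d) > 1 for all d, log ρ(d) → 0 as d → ∞, and log ρ(d) ≥ L₂/d for all d ≥ 1, and let m : ℕ → ℕ satisfy 1 ≤ m(d) ≤ d/L₃ for all d. Then for all sufficiently large d, the equation ρ(d)^t · 2^(−d) · (1 + exp(−2t/d))^(d−m(d)) · (1 − exp(−2t/d))^(m(d)) = 1 has a unique solution t_d > 0, and this solution satisfies |t_d − d·log 2/log ρ(d)| ≤ C·d·exp(−2·log 2/log ρ(d))/log ρ(d). -/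
set_option maxHeartbeats 1000000

open Filter

/-- The left-hand side of the binary (`b = 2`) first-moment equation on the hypercube
`{0,1}^d`: the first-moment equation in the unknown `t > 0` is
`binFirstMomentLHS d m ρ t = 1`. -/
noncomputable def binFirstMomentLHS (d m : ℕ) (ρ t : ℝ) : ℝ :=
  ρ ^ t * ((2 : ℝ) ^ d)⁻¹ *
    (1 + Real.exp (-(2 * t) / d)) ^ (d - m) *
    (1 - Real.exp (-(2 * t) / d)) ^ m

/-- The logarithm of the binary first-moment LHS. -/
noncomputable def auxF (d m : ℕ) (r t : ℝ) : ℝ :=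
  r * t - d * Real.log 2 + ((d : ℝ) - m) * Real.log (1 + Real.exp (-(2 * t) / d))
    + m * Real.log (1 - Real.exp (-(2 * t) / d))

lemma exp_lt_one' {d : ℕ} {t : ℝ} (hd : 1 ≤ d) (ht : 0 < t) :
    Real.exp (-(2 * t) / (d : ℝ)) < 1 := by
  have hd0 : (0:ℝ) < d := by exact_mod_cast hd
  have : -(2 * t) / (d:ℝ) < 0 := div_neg_of_neg_of_pos (by linarith) hd0
  exact Real.exp_lt_one_iff.mpr this

lemma binFirstMomentLHS_eq_exp {d m : ℕ} {ρ t : ℝ} (hd : 1 ≤ d) (hm : m ≤ d)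
    (hρ : 1 < ρ) (ht : 0 < t) :
    binFirstMomentLHS d m ρ t = Real.exp (auxF d m (Real.log ρ) t) := by
  set u := Real.exp (-(2 * t) / (d : ℝ)) with hu
  have hu0 : 0 < u := Real.exp_pos _
  have hu1 : u < 1 := exp_lt_one' hd ht
  have h1 : ρ ^ t = Real.exp (Real.log ρ * t) := Real.rpow_def_of_pos (by linarith) t
  have h2 : ((2:ℝ) ^ d)⁻¹ = Real.exp (-((d:ℝ) * Real.log 2)) := by
    rw [← Real.log_pow, Real.exp_neg, Real.exp_log (by positivity)]
  have h3 : (1 + u) ^ (d - m) = Real.exp (((d:ℝ) - m) * Real.log (1 + u)) := by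
    rw [← Nat.cast_sub hm, ← Real.log_pow, Real.exp_log (by positivity)]
  have h4 : (1 - u) ^ m = Real.exp ((m:ℝ) * Real.log (1 - u)) := by
    rw [← Real.log_pow, Real.exp_log (pow_pos (by linarith) m)]
  rw [binFirstMomentLHS, ← hu, h1, h2, h3, h4, ← Real.exp_add, ← Real.exp_add,
    ← Real.exp_add]
  simp only [auxF]
  rw [← hu]
  congr 1

lemma one_sub_exp_neg_le {x : ℝ} : 1 - Real.exp (-x) ≤ x := by
  have := Real.add_one_le_exp (-x); linarith

lemma one_sub_exp_neg_ge {x : ℝ} (hx : 0 ≤ x) : x / (1 + x) ≤ 1 - Real.exp (-x) := by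
  have h0 : (0:ℝ) < 1 + x := by linarith
  have h2 : (Real.exp x)⁻¹ ≤ (1+x)⁻¹ :=
    inv_anti₀ h0 (by linarith [Real.add_one_le_exp x])
  have h3 : x/(1+x) = 1 - (1+x)⁻¹ := by field_simp; ring
  rw [Real.exp_neg, h3]; linarith

lemma log_ge_one_sub_inv {x : ℝ} (hx : 0 < x) : 1 - x⁻¹ ≤ Real.log x := by
  have := Real.log_le_sub_one_of_pos (inv_pos.mpr hx)
  rw [Real.log_inv] at this; linarith

lemma log_sub_log_le {a b : ℝ} (ha : 0 < a) (hb : 0 < b) :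
    Real.log a - Real.log b ≤ a / b - 1 := by
  have := Real.log_le_sub_one_of_pos (div_pos ha hb)
  rwa [Real.log_div (ne_of_gt ha) (ne_of_gt hb)] at this

lemma neg_log_one_sub_le {u : ℝ} (h0 : 0 ≤ u) (h : u ≤ 1/2) : -Real.log (1-u) ≤ 2*u := by
  have h1u : (0:ℝ) < 1 - u := by linarith
  have hlog := Real.log_le_sub_one_of_pos (inv_pos.mpr h1u)
  rw [Real.log_inv] at hlog
  have hinv : (1-u)*(1-u)⁻¹ = 1 := mul_inv_cancel₀ (ne_of_gt h1u)
  have h2 : (1-u)⁻¹ - 1 ≤ 2*u := by nlinarith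
  linarith

lemma log_two_div_ge {u : ℝ} (h0 : 0 ≤ u) (h1 : u < 1) :
    (1-u)/4 ≤ Real.log (2/(1+u)) := by
  have h1u' : (0:ℝ) < 1 + u := by linarith
  set y := (1-u)/2 with hy
  have hy0 : 0 < y := by rw [hy]; linarith
  have hy1 : y ≤ 1/2 := by rw [hy]; linarith
  have hyp : (0:ℝ) < 1+y := by linarith
  have hb1 : 1 + y ≤ 2/(1+u) := by
    rw [le_div_iff₀ h1u', hy]; nlinarith [sq_nonneg (1-u)]
  have hb2 : y/2 ≤ Real.log (1+y) := by
    have hlog := log_ge_one_sub_inv hyp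
    have h5 : 1/(1+y) ≤ 1 - y/2 := by rw [div_le_iff₀ hyp]; nlinarith
    rw [one_div] at h5; linarith
  have hb3 : Real.log (1+y) ≤ Real.log (2/(1+u)) := Real.log_le_log hyp hb1
  have : (1-u)/4 = y/2 := by rw [hy]; ring
  linarith

lemma star_ineq {r : ℝ} (hr0 : 0 < r) (hrs : r ≤ 1/200000) :
    1 ≤ Real.log (2/r) ∧ 8*r*(Real.log (2/r))*(1+Real.log (2/r)) ≤ 1 := by
  set z := 2/r with hzdef
  have hz : (400000:ℝ) ≤ z := by rw [hzdef, le_div_iff₀ hr0]; linarith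
  have hz0 : (0:ℝ) ≤ z := by linarith
  set q := Real.sqrt (Real.sqrt z) with hqdef
  have hq4 : q^4 = z := by
    have h1 : Real.sqrt z ^ 2 = z := Real.sq_sqrt hz0
    have h2 : q^2 = Real.sqrt z := Real.sq_sqrt (Real.sqrt_nonneg z)
    calc q^4 = (q^2)^2 := by ring
      _ = z := by rw [h2, h1]
  have hsq625 : (625:ℝ) ≤ Real.sqrt z := by
    have : Real.sqrt 390625 ≤ Real.sqrt z := Real.sqrt_le_sqrt (by linarith)
    rwa [show (390625:ℝ) = 625^2 by norm_num, Real.sqrt_sq (by norm_num : (0:ℝ) ≤ 625)]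
      at this
  have hq25 : (25:ℝ) ≤ q := by
    have : Real.sqrt 625 ≤ Real.sqrt (Real.sqrt z) := Real.sqrt_le_sqrt (by linarith)
    rwa [show (625:ℝ) = 25^2 by norm_num, Real.sqrt_sq (by norm_num : (0:ℝ) ≤ 25)] at this
  have hq0 : (0:ℝ) < q := by linarith
  have hS : Real.log z = 4 * Real.log q := by
    rw [← hq4, Real.log_pow]; norm_num
  have hlogq_le : Real.log q ≤ q := by linarith [Real.log_le_sub_one_of_pos hq0]
  have hlogq_ge : 1 - q⁻¹ ≤ Real.log q := log_ge_one_sub_inv hq0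
  have hinv : q⁻¹ ≤ 1/25 := by
    have := inv_anti₀ (show (0:ℝ) < 25 by norm_num) hq25
    simpa using this
  have hS1 : 1 ≤ Real.log z := by rw [hS]; linarith
  refine ⟨hS1, ?_⟩
  have hS0 : (0:ℝ) ≤ Real.log z := by linarith
  have hS4q : Real.log z ≤ 4*q := by rw [hS]; linarith
  have hrz : r * z = 2 := by rw [hzdef]; field_simp
  have hrq : r * q^4 = 2 := by rw [hq4]; exact hrz
  have hq4pos : 0 < q^4 := pow_pos hq0 4
  have hmono : 8*r*Real.log z*(1+Real.log z) ≤ 8*r*(4*q)*(1+4*q) := by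
    have h1 : Real.log z*(1+Real.log z) ≤ (4*q)*(1+4*q) :=
      mul_le_mul hS4q (by linarith) (by linarith) (by positivity)
    have h2 := mul_le_mul_of_nonneg_left h1 (show (0:ℝ) ≤ 8*r by linarith)
    calc 8*r*Real.log z*(1+Real.log z) = 8*r*(Real.log z*(1+Real.log z)) := by ring
      _ ≤ 8*r*((4*q)*(1+4*q)) := h2
      _ = 8*r*(4*q)*(1+4*q) := by ring
  have hq2 : (625:ℝ) ≤ q^2 := by nlinarith
  have hqq : q ≤ q^2 := by nlinarith
  have hq4' : 625*q^2 ≤ q^4 := by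
    nlinarith [mul_nonneg (sq_nonneg q) (show (0:ℝ) ≤ q^2 - 625 by linarith)]
  have h64 : 64*q + 256*q^2 ≤ q^4 := by nlinarith
  have hfin : (8*r*(4*q)*(1+4*q)) * q^4 ≤ 1 * q^4 := by
    have he : (8*r*(4*q)*(1+4*q)) * q^4 = 32*(r*q^4)*q + 128*(r*q^4)*q^2 := by ring
    rw [he, hrq, one_mul]
    linarith
  have := le_of_mul_le_mul_right hfin hq4pos
  linarith

lemma auxF_neg {d m : ℕ} {r t : ℝ} (hd : 1 ≤ d) (hm1 : 1 ≤ m) (hmd : m ≤ d)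
    (hr0 : 0 < r) (hdr : 1 ≤ (d:ℝ) * r)
    (hS1 : 1 ≤ Real.log (2/r)) (hstar : 8*r*(Real.log (2/r))*(1+Real.log (2/r)) ≤ 1)
    (ht : 0 < t) (htT : t ≤ (d:ℝ)/2 * Real.log (2/r)) : auxF d m r t < 0 := by
  set S := Real.log (2/r) with hS
  clear_value S
  have hd0 : (0:ℝ) < d := by exact_mod_cast hd
  set x := 2*t/(d:ℝ) with hx
  have hxpos : 0 < x := by rw [hx]; exact div_pos (by linarith) hd0
  have hux : -(2*t)/(d:ℝ) = -x := by rw [hx]; ring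
  have hxS : x ≤ S := by rw [hx, div_le_iff₀ hd0]; linarith
  have hdx : (d:ℝ)*x = 2*t := by rw [hx]; field_simp
  clear_value x
  set u := Real.exp (-x) with hu
  have hu0 : 0 < u := Real.exp_pos _
  have hu1 : u < 1 := Real.exp_lt_one_iff.mpr (by linarith)
  have h1u : 0 < 1 - u := by linarith
  have h1u' : (0:ℝ) < 1 + u := by linarith
  have hSpos : 0 < S := by linarith
  have h1mu_le : 1 - u ≤ x := by rw [hu]; exact one_sub_exp_neg_le
  have h1mu_ge : x/(1+x) ≤ 1 - u := by rw [hu]; exact one_sub_exp_neg_ge hxpos.le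
  have hFle : auxF d m r t = r*t - d*Real.log 2 + ((d:ℝ)-m)*Real.log (1+u)
      + m*Real.log (1-u) := by rw [auxF, hux, ← hu]
  have hlogdiv := log_two_div_ge hu0.le hu1
  have hldiv : Real.log (2/(1+u)) = Real.log 2 - Real.log (1+u) :=
    Real.log_div two_ne_zero (ne_of_gt h1u')
  clear_value u
  clear hu
  have hm1' : (1:ℝ) ≤ m := by exact_mod_cast hm1
  have hmd' : (m:ℝ) ≤ d := by exact_mod_cast hmd
  have hlg1 : 0 ≤ Real.log (1+u) := Real.log_nonneg (by linarith)
  have hlg2 : Real.log (1-u) ≤ 0 := Real.log_nonpos (by linarith) (by linarith)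
  -- step 1
  have step1 : auxF d m r t ≤ r*t - d*(Real.log 2 - Real.log (1+u)) + Real.log (1-u) := by
    rw [hFle]
    linarith [mul_nonneg (by linarith : (0:ℝ) ≤ (m:ℝ)-1) (neg_nonneg.mpr hlg2),
      mul_nonneg (by linarith : (0:ℝ) ≤ (m:ℝ)) hlg1]
  -- step 2
  have step2 : Real.log (1-u) ≤ Real.log x := Real.log_le_log h1u h1mu_le
  -- step 3
  have h1x : (0:ℝ) < 1 + x := by linarith
  have step3 : t/(2*(1+S)) ≤ (d:ℝ)*(Real.log 2 - Real.log (1+u)) := by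
    have heq : (d:ℝ)*(x/(1+x))/4 = t/(2*(1+x)) := by
      field_simp
      linear_combination 2 * hdx
    have hmono : t/(2*(1+S)) ≤ t/(2*(1+x)) :=
      div_le_div_of_nonneg_left ht.le (by linarith) (by linarith)
    have hA : (d:ℝ)*(x/(1+x))/4 ≤ (d:ℝ)*(1-u)/4 := by
      have := mul_le_mul_of_nonneg_left h1mu_ge hd0.le; linarith
    have hB : (d:ℝ)*(1-u)/4 ≤ (d:ℝ)*Real.log (2/(1+u)) := by
      have := mul_le_mul_of_nonneg_left hlogdiv hd0.le; linarith
    rw [← hldiv]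
    linarith
  -- step 4
  have h4r : 4*r*(1+S) ≤ 1 := by
    have hkey : 0 ≤ 4*r*(1+S)*(2*S-1) :=
      mul_nonneg (mul_nonneg (mul_nonneg (by norm_num) hr0.le) (by linarith)) (by linarith)
    linarith [hkey]
  have step4 : r*t ≤ t/(4*(1+S)) := by
    rw [le_div_iff₀ (show (0:ℝ) < 4*(1+S) by linarith)]
    have := mul_le_mul_of_nonneg_left h4r ht.le
    linarith [this]
  have h2' : t/(2*(1+S)) - t/(4*(1+S)) = t/(4*(1+S)) := by
    field_simp [show (1:ℝ)+S ≠ 0 by linarith]; ring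
  have hmain : auxF d m r t ≤ Real.log x - t/(4*(1+S)) := by linarith
  rcases le_or_gt x 1 with hx1 | hx1
  · have hlx : Real.log x ≤ 0 := Real.log_nonpos hxpos.le hx1
    have : 0 < t/(4*(1+S)) := div_pos ht (by linarith)
    linarith
  · have hlogx : Real.log x ≤ Real.log S := Real.log_le_log hxpos hxS
    have hlogS : Real.log S ≤ S - 1 := by
      have := Real.log_le_sub_one_of_pos hSpos; linarith
    have htd : (d:ℝ) < 2*t := by
      have h := (mul_lt_mul_iff_right₀ hd0).mpr hx1
      rw [mul_one, hdx] at h; linarith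
    have h4S : 4*S*(1+S) ≤ t := by
      have h1 : 4*S*(1+S) ≤ 1/(2*r) := by
        rw [le_div_iff₀ (show (0:ℝ) < 2*r by linarith)]; linarith [hstar]
      have h2 : 1/(2*r) ≤ (d:ℝ)/2 := by
        rw [div_le_div_iff₀ (show (0:ℝ) < 2*r by linarith) (by norm_num : (0:ℝ) < 2)]
        linarith
      linarith
    have hSle : S ≤ t/(4*(1+S)) := by
      rw [le_div_iff₀ (show (0:ℝ) < 4*(1+S) by linarith)]
      calc S*(4*(1+S)) = 4*S*(1+S) := by ring
        _ ≤ t := h4S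
    linarith

lemma auxF_strictMono {d m : ℕ} {r t₁ t₂ : ℝ} (hd : 1 ≤ d) (hm1 : 1 ≤ m) (hmd : m ≤ d)
    (hr0 : 0 < r) (hr1 : r ≤ 1) (ht₁ : 0 < t₁)
    (hu₁r : Real.exp (-(2*t₁)/(d:ℝ)) ≤ r/2) (h12 : t₁ < t₂) :
    auxF d m r t₁ < auxF d m r t₂ := by
  have hd0 : (0:ℝ) < d := by exact_mod_cast hd
  have hm1' : (1:ℝ) ≤ m := by exact_mod_cast hm1
  have hmd' : (m:ℝ) ≤ d := by exact_mod_cast hmd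
  set u₁ := Real.exp (-(2*t₁)/(d:ℝ)) with hu1def
  set u₂ := Real.exp (-(2*t₂)/(d:ℝ)) with hu2def
  have hu₁0 : 0 < u₁ := Real.exp_pos _
  have hu₂0 : 0 < u₂ := Real.exp_pos _
  have hu₁1 : u₁ < 1 := by
    have h := hu₁r; nlinarith
  have hu21 : u₂ < u₁ := by
    apply Real.exp_lt_exp.mpr
    apply div_lt_div_of_pos_right ?_ hd0
    · linarith
  have h1u₁ : 0 < 1 - u₁ := by linarith
  have h1u₂ : 0 < 1 - u₂ := by linarith
  have key1 : Real.log (1+u₁) - Real.log (1+u₂) ≤ u₁ - u₂ := by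
    have h := log_sub_log_le (show (0:ℝ) < 1+u₁ by linarith) (show (0:ℝ) < 1+u₂ by linarith)
    have h2 : (1+u₁)/(1+u₂) - 1 ≤ u₁ - u₂ := by
      rw [sub_le_iff_le_add, div_le_iff₀ (show (0:ℝ) < 1+u₂ by linarith)]
      nlinarith [mul_nonneg hu₂0.le (show (0:ℝ) ≤ u₁ - u₂ by linarith)]
    linarith
  have hu2eq : u₂ = u₁ * Real.exp (-(2*(t₂-t₁))/(d:ℝ)) := by
    rw [hu1def, hu2def, ← Real.exp_add]
    congr 1
    ring
  have key2 : u₁ - u₂ ≤ u₁ * (2*(t₂-t₁)/(d:ℝ)) := by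
    have hy : 1 - Real.exp (-(2*(t₂-t₁))/(d:ℝ)) ≤ 2*(t₂-t₁)/(d:ℝ) := by
      have := one_sub_exp_neg_le (x := 2*(t₂-t₁)/(d:ℝ))
      rwa [← neg_div] at this
    calc u₁ - u₂ = u₁ * (1 - Real.exp (-(2*(t₂-t₁))/(d:ℝ))) := by rw [hu2eq]; ring
      _ ≤ u₁ * (2*(t₂-t₁)/(d:ℝ)) := by
          exact mul_le_mul_of_nonneg_left hy hu₁0.le
  have key2' : (d:ℝ)*(u₁-u₂) ≤ r*(t₂-t₁) := by
    have h1 : (d:ℝ)*(u₁-u₂) ≤ (d:ℝ)*(u₁ * (2*(t₂-t₁)/(d:ℝ))) :=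
      mul_le_mul_of_nonneg_left key2 hd0.le
    have h2 : (d:ℝ)*(u₁ * (2*(t₂-t₁)/(d:ℝ))) = u₁ * (2*(t₂-t₁)) := by
      field_simp
    have h3 : u₁ * (2*(t₂-t₁)) ≤ (r/2) * (2*(t₂-t₁)) :=
      mul_le_mul_of_nonneg_right hu₁r (by linarith)
    calc (d:ℝ)*(u₁-u₂) ≤ u₁ * (2*(t₂-t₁)) := by rw [← h2]; exact h1
      _ ≤ (r/2) * (2*(t₂-t₁)) := h3
      _ = r*(t₂-t₁) := by ring
  have key3 : Real.log (1-u₁) < Real.log (1-u₂) := Real.log_lt_log h1u₁ (by linarith)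
  have hldiff : 0 ≤ Real.log (1+u₁) - Real.log (1+u₂) := by
    have := Real.log_le_log (show (0:ℝ) < 1+u₂ by linarith)
      (show (1:ℝ)+u₂ ≤ 1+u₁ by linarith)
    linarith
  have hA : ((d:ℝ)-m)*(Real.log (1+u₁) - Real.log (1+u₂)) ≤ (d:ℝ)*(u₁-u₂) :=
    mul_le_mul (by linarith) key1 hldiff hd0.le
  have hB : (1:ℝ)*(Real.log (1-u₂) - Real.log (1-u₁)) ≤
      (m:ℝ)*(Real.log (1-u₂) - Real.log (1-u₁)) :=
    mul_le_mul_of_nonneg_right hm1' (by linarith)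
  have e1 : auxF d m r t₁ = r*t₁ - d*Real.log 2 + ((d:ℝ)-m)*Real.log (1+u₁)
      + m*Real.log (1-u₁) := rfl
  have e2 : auxF d m r t₂ = r*t₂ - d*Real.log 2 + ((d:ℝ)-m)*Real.log (1+u₂)
      + m*Real.log (1-u₂) := rfl
  rw [e1, e2]
  nlinarith [hA, hB, key2', key3]

lemma auxF_root_bound {d m : ℕ} {r t : ℝ} (hd : 1 ≤ d) (hm1 : 1 ≤ m) (hmd : m ≤ d)
    (hr0 : 0 < r) (hr2 : r ≤ 1/2) (ht0 : 0 < t)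
    (hu : Real.exp (-(2*t)/(d:ℝ)) ≤ r/2) (hroot : auxF d m r t = 0) :
    |t - d * Real.log 2 / r| ≤ 9 * d * Real.exp (-(2*Real.log 2)/r) / r := by
  have hd0 : (0:ℝ) < d := by exact_mod_cast hd
  have hm1' : (1:ℝ) ≤ m := by exact_mod_cast hm1
  have hmd' : (m:ℝ) ≤ d := by exact_mod_cast hmd
  set u := Real.exp (-(2*t)/(d:ℝ)) with hudef
  have hu0 : 0 < u := Real.exp_pos _
  have hu12 : u ≤ 1/2 := by linarith
  have h1u : (0:ℝ) < 1 - u := by linarith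
  have hlog2 : 0 < Real.log 2 := Real.log_pos (by norm_num)
  have hA1 : Real.log (1+u) ≤ u := by
    have := Real.log_le_sub_one_of_pos (show (0:ℝ) < 1+u by linarith); linarith
  have hA1' : 0 ≤ Real.log (1+u) := Real.log_nonneg (by linarith)
  have hA : 0 ≤ ((d:ℝ)-m)*Real.log (1+u) ∧ ((d:ℝ)-m)*Real.log (1+u) ≤ (d:ℝ)*u := by
    constructor
    · exact mul_nonneg (by linarith) hA1'
    · exact mul_le_mul (by linarith) hA1 hA1' hd0.le
  have hB1 : -Real.log (1-u) ≤ 2*u := neg_log_one_sub_le hu0.le hu12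
  have hB1' : 0 ≤ -Real.log (1-u) := by
    have := Real.log_nonpos (by linarith) (by linarith : 1-u ≤ 1); linarith
  have hB : 0 ≤ (m:ℝ)*(-Real.log (1-u)) ∧ (m:ℝ)*(-Real.log (1-u)) ≤ 2*((d:ℝ)*u) := by
    constructor
    · exact mul_nonneg (by linarith) hB1'
    · calc (m:ℝ)*(-Real.log (1-u)) ≤ (d:ℝ)*(2*u) :=
            mul_le_mul hmd' hB1 hB1' hd0.le
        _ = 2*((d:ℝ)*u) := by ring
  have hFeq : r*t - d*Real.log 2 + ((d:ℝ)-m)*Real.log (1+u) + m*Real.log (1-u) = 0 := hroot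
  have habs : |r*t - (d:ℝ)*Real.log 2| ≤ 3*((d:ℝ)*u) := by
    rw [abs_le]
    constructor <;> nlinarith [hA.1, hA.2, hB.1, hB.2]
  have hud : (d:ℝ)*u ≤ (d:ℝ)*(r/2) := mul_le_mul_of_nonneg_left hu hd0.le
  have hlow : (d:ℝ)*Real.log 2 - (d:ℝ)*u ≤ r*t := by nlinarith [hA.2, hB.1]
  have h1 : -(2*t)/(d:ℝ) ≤ (r - 2*Real.log 2)/r := by
    rw [div_le_div_iff₀ hd0 hr0]
    nlinarith
  have h2 : u ≤ Real.exp ((r - 2*Real.log 2)/r) := by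
    rw [hudef]; exact Real.exp_le_exp.mpr h1
  clear_value u
  have h3 : Real.exp ((r-2*Real.log 2)/r) = Real.exp 1 * Real.exp (-(2*Real.log 2)/r) := by
    rw [← Real.exp_add]; congr 1; field_simp; ring
  have hexp1 : Real.exp 1 ≤ 3 := by
    have := Real.exp_one_lt_d9; linarith
  have huB : u ≤ 3 * Real.exp (-(2*Real.log 2)/r) := by
    have hp : 0 < Real.exp (-(2*Real.log 2)/r) := Real.exp_pos _
    calc u ≤ Real.exp ((r-2*Real.log 2)/r) := h2
      _ = Real.exp 1 * Real.exp (-(2*Real.log 2)/r) := h3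
      _ ≤ 3 * Real.exp (-(2*Real.log 2)/r) := mul_le_mul_of_nonneg_right hexp1 hp.le
  have heq : t - (d:ℝ)*Real.log 2/r = (r*t - (d:ℝ)*Real.log 2)/r := by
    rw [eq_div_iff (ne_of_gt hr0), sub_mul, div_mul_cancel₀ _ (ne_of_gt hr0), mul_comm]
  rw [heq, abs_div, abs_of_pos hr0]
  have hnum : |r*t - (d:ℝ)*Real.log 2| ≤ 9 * d * Real.exp (-(2*Real.log 2)/r) := by
    calc |r*t - (d:ℝ)*Real.log 2| ≤ 3*((d:ℝ)*u) := habs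
      _ ≤ 3*((d:ℝ)*(3 * Real.exp (-(2*Real.log 2)/r))) := by
          have := mul_le_mul_of_nonneg_left huB hd0.le
          linarith
      _ = 9 * d * Real.exp (-(2*Real.log 2)/r) := by ring
  exact div_le_div_of_nonneg_right hnum hr0.le |>.trans_eq rfl

lemma auxF_pos_at {d m : ℕ} {r t : ℝ} (hd : 1 ≤ d) (hmd : m ≤ d) (hr0 : 0 < r)
    (hr1 : r ≤ 1) (ht0 : 0 < t) (hu : Real.exp (-(2*t)/(d:ℝ)) ≤ r/2)
    (hge : 2*(d:ℝ)*Real.log 2 < r*t) :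
    0 < auxF d m r t := by
  have hd0 : (0:ℝ) < d := by exact_mod_cast hd
  have hmd' : (m:ℝ) ≤ d := by exact_mod_cast hmd
  set u := Real.exp (-(2*t)/(d:ℝ)) with hudef
  have hu0 : 0 < u := Real.exp_pos _
  have h1u : (0:ℝ) < 1 - u := by linarith
  have hlg : -Real.log 2 ≤ Real.log (1-u) := by
    have h := Real.log_le_log (show (0:ℝ) < 1/2 by norm_num)
      (show (1:ℝ)/2 ≤ 1-u by linarith)
    rw [show (1:ℝ)/2 = 2⁻¹ by norm_num, Real.log_inv] at h
    linarith
  have hneg : Real.log (1-u) ≤ 0 := Real.log_nonpos (by linarith) (by linarith)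
  have h1 : (d:ℝ)*Real.log (1-u) ≤ (m:ℝ)*Real.log (1-u) :=
    mul_le_mul_of_nonpos_right hmd' hneg
  have h2 : (d:ℝ)*(-Real.log 2) ≤ (d:ℝ)*Real.log (1-u) :=
    mul_le_mul_of_nonneg_left hlg hd0.le
  have h3 : 0 ≤ ((d:ℝ)-m)*Real.log (1+u) :=
    mul_nonneg (by linarith) (Real.log_nonneg (by linarith))
  have he : auxF d m r t = r*t - d*Real.log 2 + ((d:ℝ)-m)*Real.log (1+u)
      + m*Real.log (1-u) := rfl
  rw [he]
  nlinarith [h1, h2, h3]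

/-- Ultra-slow branching regime, `b = 2`. -/
theorem binFirstMoment_ultraslow_expansion :
    ∃ L₂ L₃ C : ℝ, 0 < L₂ ∧ 0 < L₃ ∧ 0 < C ∧
      ∀ ρ : ℕ → ℝ, (∀ d, 1 < ρ d) →
        Tendsto (fun d => Real.log (ρ d)) atTop (nhds 0) →
        (∀ d : ℕ, 1 ≤ d → L₂ / d ≤ Real.log (ρ d)) →
        ∃ D : ℕ, ∀ d ≥ D, ∀ m : ℕ, 1 ≤ m → (m : ℝ) ≤ (d : ℝ) / L₃ →
          (∃! t : ℝ, 0 < t ∧ binFirstMomentLHS d m (ρ d) t = 1) ∧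
          ∀ t : ℝ, 0 < t → binFirstMomentLHS d m (ρ d) t = 1 →
            |t - d * Real.log 2 / Real.log (ρ d)| ≤
              C * d * Real.exp (-(2 * Real.log 2) / Real.log (ρ d)) / Real.log (ρ d) := by
  refine ⟨1, 1, 9, one_pos, one_pos, by norm_num, ?_⟩
  intro ρ hρ htend hlow
  have hev : ∀ᶠ d in atTop, Real.log (ρ d) < 1/200000 :=
    (tendsto_order.mp htend).2 (1/200000) (by norm_num)
  obtain ⟨D₁, hD₁⟩ := eventually_atTop.mp hev
  refine ⟨max D₁ 1, ?_⟩
  intro d hd m hm1 hm2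
  have hd1 : 1 ≤ d := le_trans (le_max_right D₁ 1) hd
  have hd0 : (0:ℝ) < d := by exact_mod_cast hd1
  have hρd := hρ d
  set r := Real.log (ρ d) with hrdef
  have hr0 : 0 < r := Real.log_pos hρd
  have hrs : r ≤ 1/200000 := le_of_lt (hD₁ d (le_trans (le_max_left D₁ 1) hd))
  have hr1 : r ≤ 1 := by linarith
  have hr2 : r ≤ 1/2 := by linarith
  have hdr : 1 ≤ (d:ℝ)*r := by
    have h := hlow d hd1
    rw [div_le_iff₀ hd0] at h
    linarith
  have hmd' : (m:ℝ) ≤ (d:ℝ) := by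
    have := hm2; rw [div_one] at this; exact this
  have hmd : m ≤ d := by exact_mod_cast hmd'
  obtain ⟨hS1, hstar⟩ := star_ineq hr0 hrs
  set T₁ := (d:ℝ)/2 * Real.log (2/r) with hT1def
  have hT1pos : 0 < T₁ := mul_pos (by linarith) (by linarith)
  have hu_of : ∀ t, T₁ ≤ t → Real.exp (-(2*t)/(d:ℝ)) ≤ r/2 := by
    intro t htt
    have hexp : Real.exp (-Real.log (2/r)) = r/2 := by
      rw [Real.exp_neg, Real.exp_log (by positivity), inv_div]
    rw [← hexp]
    apply Real.exp_le_exp.mpr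
    rw [div_le_iff₀ hd0]
    rw [hT1def] at htt
    nlinarith
  have hroot_gt : ∀ t, 0 < t → auxF d m r t = 0 → T₁ < t := by
    intro t ht heq0
    by_contra hle
    push_neg at hle
    exact absurd heq0 (ne_of_lt (auxF_neg hd1 hm1 hmd hr0 hdr hS1 hstar ht hle))
  set t₂ := T₁ + 4*(d:ℝ)/r with ht2def
  have hT1t2 : T₁ ≤ t₂ := by
    rw [ht2def]
    have : 0 < 4*(d:ℝ)/r := by positivity
    linarith
  have ht2pos : 0 < t₂ := lt_of_lt_of_le hT1pos hT1t2
  have hrt2 : r*t₂ = r*T₁ + 4*d := by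
    rw [ht2def]; field_simp
  have hlog2lt : Real.log 2 < 1 := by
    have := Real.log_two_lt_d9; linarith
  have hpos2 : 0 < auxF d m r t₂ := by
    apply auxF_pos_at hd1 hmd hr0 hr1 ht2pos (hu_of t₂ hT1t2)
    have h1 : 0 < r*T₁ := mul_pos hr0 hT1pos
    have h2 : 2*(d:ℝ)*Real.log 2 < 4*d := by nlinarith
    rw [hrt2]; linarith
  have hnegT1 : auxF d m r T₁ < 0 :=
    auxF_neg hd1 hm1 hmd hr0 hdr hS1 hstar hT1pos (le_of_eq hT1def)
  have hcont : ContinuousOn (fun t => auxF d m r t) (Set.Icc T₁ t₂) := by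
    have hc1 : Continuous fun t : ℝ => r*t - (d:ℝ)*Real.log 2 := by continuity
    have hc2 : Continuous fun t : ℝ =>
        ((d:ℝ)-(m:ℝ)) * Real.log (1+Real.exp (-(2*t)/(d:ℝ))) := by
      apply Continuous.mul continuous_const
      apply Continuous.log
      · continuity
      · intro x; positivity
    have hc3 : ContinuousOn (fun t : ℝ =>
        (m:ℝ) * Real.log (1-Real.exp (-(2*t)/(d:ℝ)))) (Set.Icc T₁ t₂) := by
      apply ContinuousOn.mul continuousOn_const
      apply ContinuousOn.log
      · exact Continuous.continuousOn (by continuity)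
      · intro x hx
        have hxpos : 0 < x := lt_of_lt_of_le hT1pos hx.1
        have := exp_lt_one' hd1 hxpos
        have h' : 0 < 1 - Real.exp (-(2*x)/(d:ℝ)) := by linarith
        exact ne_of_gt h'
    have heqf : (fun t => auxF d m r t) = fun t : ℝ =>
        (r*t - (d:ℝ)*Real.log 2) + ((d:ℝ)-(m:ℝ)) * Real.log (1+Real.exp (-(2*t)/(d:ℝ)))
        + (m:ℝ) * Real.log (1-Real.exp (-(2*t)/(d:ℝ))) := rfl
    rw [heqf]
    exact ((hc1.add hc2).continuousOn).add hc3
  obtain ⟨t0, ht0mem, ht0eq⟩ :=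
    intermediate_value_Icc hT1t2 hcont ⟨hnegT1.le, hpos2.le⟩
  replace ht0eq : auxF d m r t0 = 0 := ht0eq
  have ht0pos : 0 < t0 := lt_of_lt_of_le hT1pos ht0mem.1
  have ht0gt : T₁ < t0 := hroot_gt t0 ht0pos ht0eq
  have hiff : ∀ t : ℝ, 0 < t → (binFirstMomentLHS d m (ρ d) t = 1 ↔ auxF d m r t = 0) := by
    intro t ht
    rw [binFirstMomentLHS_eq_exp hd1 hmd hρd ht, ← hrdef]
    exact Real.exp_eq_one_iff _
  constructor
  · refine ⟨t0, ⟨ht0pos, (hiff t0 ht0pos).mpr ht0eq⟩, ?_⟩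
    rintro t' ⟨ht'pos, ht'eq⟩
    have h0' : auxF d m r t' = 0 := (hiff t' ht'pos).mp ht'eq
    have hgt' : T₁ < t' := hroot_gt t' ht'pos h0'
    rcases lt_trichotomy t' t0 with h | h | h
    · have := auxF_strictMono hd1 hm1 hmd hr0 hr1 ht'pos (hu_of t' hgt'.le) h
      rw [h0', ht0eq] at this
      exact absurd this (lt_irrefl 0)
    · exact h
    · have := auxF_strictMono hd1 hm1 hmd hr0 hr1 ht0pos (hu_of t0 ht0gt.le) h
      rw [h0', ht0eq] at this
      exact absurd this (lt_irrefl 0)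
  · intro t ht heq1
    have h0 : auxF d m r t = 0 := (hiff t ht).mp heq1
    have hgt : T₁ < t := hroot_gt t ht h0
    exact auxF_root_bound hd1 hm1 hmd hr0 hr2 ht (hu_of t hgt.le) h0
end

section
/- For all natural numbers d, m, ℓ' with m ≤ d, the sum over all natural numbers ℓ and i with i + ℓ ≥ ℓ' and i + ℓ ≥ m of C(m, i) · C(m−i, i+ℓ−ℓ') · C(d−m, i+ℓ−m) is at most C(d, ℓ') · 2^(ℓ'). -/
open Finset

/-- Trinomial-revision based pointwise bound. -/
lemma pointwise_bound (m ℓ' i b : ℕ) (hb : m ≤ b + ℓ') :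
    m.choose i * (m - i).choose b ≤ ℓ'.choose i * m.choose b := by
  rcases le_or_gt (i + b) m with h | h
  · have h1 : m.choose (i + b) * (i + b).choose i = m.choose i * (m - i).choose b := by
      have := Nat.choose_mul (n := m) (k := i + b) (s := i) (Nat.le_add_right _ _)
      simpa [Nat.add_sub_cancel_left] using this
    have h2 : m.choose (i + b) * (i + b).choose b = m.choose b * (m - b).choose i := by
      have := Nat.choose_mul (n := m) (k := i + b) (s := b) (Nat.le_add_left _ _)
      simpa [Nat.add_sub_cancel] using this
    have hsymm : (i + b).choose i = (i + b).choose b := Nat.choose_symm_add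
    have : m.choose i * (m - i).choose b = m.choose b * (m - b).choose i := by
      rw [← h1, hsymm, h2]
    rw [this]
    have : (m - b).choose i ≤ ℓ'.choose i := Nat.choose_le_choose i (by omega)
    calc m.choose b * (m - b).choose i ≤ m.choose b * ℓ'.choose i :=
          Nat.mul_le_mul_left _ this
      _ = ℓ'.choose i * m.choose b := Nat.mul_comm _ _
  · rcases le_or_gt i m with hi | hi
    · have : (m - i).choose b = 0 := Nat.choose_eq_zero_of_lt (by omega)
      simp [this]
    · have : m.choose i = 0 := Nat.choose_eq_zero_of_lt hi
      simp [this]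

/-- Vandermonde identity in the needed form. -/
lemma icc_vandermonde (d m ℓ' : ℕ) (hm : m ≤ d) :
    ∑ j ∈ Finset.Icc ℓ' d, m.choose (j - ℓ') * (d - m).choose (d - j) = d.choose ℓ' := by
  rcases le_or_gt ℓ' d with h | h
  · have hd : d.choose ℓ' = (m + (d - m)).choose (d - ℓ') := by
      rw [Nat.add_sub_cancel' hm, Nat.choose_symm h]
    rw [hd, Nat.add_choose_eq]
    refine Finset.sum_nbij' (fun j => (j - ℓ', d - j)) (fun p => p.1 + ℓ') ?_ ?_ ?_ ?_ ?_
    · intro j hj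
      simp only [Finset.mem_Icc] at hj
      simp only [Finset.HasAntidiagonal.mem_antidiagonal]
      omega
    · intro p hp
      simp only [Finset.HasAntidiagonal.mem_antidiagonal] at hp
      simp only [Finset.mem_Icc]
      omega
    · intro j hj
      simp only [Finset.mem_Icc] at hj
      dsimp only
      omega
    · intro p hp
      simp only [Finset.HasAntidiagonal.mem_antidiagonal] at hp
      rw [Prod.mk.injEq]
      constructor <;> omega
    · intro j hj
      rfl
  · rw [Nat.choose_eq_zero_of_lt h, Finset.Icc_eq_empty (by omega), Finset.sum_empty]

/-- The inner sum bound for fixed `i`. -/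
lemma inner_sum_bound (d m ℓ' i : ℕ) (hm : m ≤ d) :
    (∑ ℓ ∈ Finset.range (d + ℓ' + 1),
        if ℓ' ≤ i + ℓ ∧ m ≤ i + ℓ then
          m.choose (i + ℓ - ℓ') * (d - m).choose (i + ℓ - m) else 0) ≤
      d.choose ℓ' := by
  set f : ℕ → ℕ := fun j =>
    if ℓ' ≤ j ∧ m ≤ j then m.choose (j - ℓ') * (d - m).choose (j - m) else 0 with hf
  have step1 : (∑ ℓ ∈ Finset.range (d + ℓ' + 1),
      if ℓ' ≤ i + ℓ ∧ m ≤ i + ℓ then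
        m.choose (i + ℓ - ℓ') * (d - m).choose (i + ℓ - m) else 0)
      = ∑ j ∈ (Finset.range (d + ℓ' + 1)).image (fun ℓ => i + ℓ), f j := by
    rw [Finset.sum_image (by intro a _ b _ h; simp only at h; omega)]
  rw [step1]
  have step2 : ∑ j ∈ (Finset.range (d + ℓ' + 1)).image (fun ℓ => i + ℓ), f j
      ≤ ∑ j ∈ Finset.Icc ℓ' d, f j := by
    apply Finset.sum_le_sum_of_ne_zero
    intro j _ hne
    simp only [hf, Finset.mem_Icc] at hne ⊢
    by_cases hc : ℓ' ≤ j ∧ m ≤ j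
    · rw [if_pos hc] at hne
      have h2 : (d - m).choose (j - m) ≠ 0 := by
        intro h0; rw [h0, Nat.mul_zero] at hne; exact hne rfl
      have : j - m ≤ d - m := by
        by_contra hlt
        exact h2 (Nat.choose_eq_zero_of_lt (by omega))
      omega
    · rw [if_neg hc] at hne; exact absurd rfl hne
  have step3 : ∑ j ∈ Finset.Icc ℓ' d, f j
      ≤ ∑ j ∈ Finset.Icc ℓ' d, m.choose (j - ℓ') * (d - m).choose (d - j) := by
    apply Finset.sum_le_sum
    intro j hj
    simp only [Finset.mem_Icc] at hj
    simp only [hf]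
    by_cases hc : ℓ' ≤ j ∧ m ≤ j
    · rw [if_pos hc]
      have : (d - m).choose (j - m) = (d - m).choose (d - j) := by
        rw [← Nat.choose_symm (by omega)]
        congr 1
        omega
      rw [this]
    · rw [if_neg hc]; exact Nat.zero_le _
  calc _ ≤ _ := step2
    _ ≤ _ := step3
    _ = d.choose ℓ' := icc_vandermonde d m ℓ' hm

/-- For all natural numbers `d, m, ℓ'` with `m ≤ d`, the sum over all `ℓ` and `i` with
`i + ℓ ≥ ℓ'` and `i + ℓ ≥ m` of `C(m,i)·C(m−i, i+ℓ−ℓ')·C(d−m, i+ℓ−m)` is at most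
`C(d,ℓ')·2^ℓ'`. (Only finitely many terms are nonzero; the sum is taken over
`ℓ ≤ d + ℓ'` and `i ≤ m`, outside of which all terms vanish.) -/
theorem binomial_triple_sum_bound (d m ℓ' : ℕ) (hm : m ≤ d) :
    (∑ ℓ ∈ Finset.range (d + ℓ' + 1), ∑ i ∈ Finset.range (m + 1),
        if ℓ' ≤ i + ℓ ∧ m ≤ i + ℓ then
          m.choose i * (m - i).choose (i + ℓ - ℓ') * (d - m).choose (i + ℓ - m)
        else 0) ≤
      d.choose ℓ' * 2 ^ ℓ' := by
  have step1 : (∑ ℓ ∈ Finset.range (d + ℓ' + 1), ∑ i ∈ Finset.range (m + 1),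
        if ℓ' ≤ i + ℓ ∧ m ≤ i + ℓ then
          m.choose i * (m - i).choose (i + ℓ - ℓ') * (d - m).choose (i + ℓ - m)
        else 0)
      ≤ ∑ i ∈ Finset.range (m + 1), ∑ ℓ ∈ Finset.range (d + ℓ' + 1),
        ℓ'.choose i * (if ℓ' ≤ i + ℓ ∧ m ≤ i + ℓ then
          m.choose (i + ℓ - ℓ') * (d - m).choose (i + ℓ - m) else 0) := by
    rw [Finset.sum_comm]
    apply Finset.sum_le_sum
    intro i _
    apply Finset.sum_le_sum
    intro ℓ _
    by_cases hc : ℓ' ≤ i + ℓ ∧ m ≤ i + ℓ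
    · rw [if_pos hc, if_pos hc]
      have hb : m ≤ (i + ℓ - ℓ') + ℓ' := by omega
      have := pointwise_bound m ℓ' i (i + ℓ - ℓ') hb
      calc m.choose i * (m - i).choose (i + ℓ - ℓ') * (d - m).choose (i + ℓ - m)
          ≤ ℓ'.choose i * m.choose (i + ℓ - ℓ') * (d - m).choose (i + ℓ - m) :=
            Nat.mul_le_mul_right _ this
        _ = ℓ'.choose i * (m.choose (i + ℓ - ℓ') * (d - m).choose (i + ℓ - m)) :=
            Nat.mul_assoc _ _ _
    · rw [if_neg hc, if_neg hc, Nat.mul_zero]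
  have step2 : ∀ i, (∑ ℓ ∈ Finset.range (d + ℓ' + 1),
        ℓ'.choose i * (if ℓ' ≤ i + ℓ ∧ m ≤ i + ℓ then
          m.choose (i + ℓ - ℓ') * (d - m).choose (i + ℓ - m) else 0))
      ≤ ℓ'.choose i * d.choose ℓ' := by
    intro i
    rw [← Finset.mul_sum]
    exact Nat.mul_le_mul_left _ (inner_sum_bound d m ℓ' i hm)
  have step3 : ∑ i ∈ Finset.range (m + 1), ℓ'.choose i ≤ 2 ^ ℓ' := by
    calc ∑ i ∈ Finset.range (m + 1), ℓ'.choose i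
        ≤ ∑ i ∈ Finset.range (m + ℓ' + 1), ℓ'.choose i :=
          Finset.sum_le_sum_of_subset (Finset.range_subset_range.2 (by omega))
      _ = ∑ i ∈ Finset.range (ℓ' + 1), ℓ'.choose i := by
          symm
          apply Finset.sum_subset (Finset.range_subset_range.2 (by omega))
          intro x _ hx
          simp only [Finset.mem_range, not_lt] at hx
          exact Nat.choose_eq_zero_of_lt (by omega)
      _ = 2 ^ ℓ' := Nat.sum_range_choose ℓ'
  calc _ ≤ _ := step1
    _ ≤ ∑ i ∈ Finset.range (m + 1), ℓ'.choose i * d.choose ℓ' :=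
        Finset.sum_le_sum (fun i _ => step2 i)
    _ = (∑ i ∈ Finset.range (m + 1), ℓ'.choose i) * d.choose ℓ' := by
        rw [Finset.sum_mul]
    _ ≤ 2 ^ ℓ' * d.choose ℓ' := Nat.mul_le_mul_right _ step3
    _ = d.choose ℓ' * 2 ^ ℓ' := Nat.mul_comm _ _
end

section
/- Let b ≥ 2 be an integer and c > 0 a real number. Define f : [0,1] → ℝ by f(s) = b^s · (1 + (b−1)·exp(−c))^(−s) · ((1 + (b−1)·exp(−c·(1−s)))·(1 + (b−1)·exp(−c·s))² + (b−1)·(1 − exp(−c·(1−s)))·(1 − exp(−c·s))²). Then f(0) = f(1) = b²·(1 + (b−1)·exp(−c)), and f(s) < b²·(1 + (b−1)·exp(−c)) for every s with 0 < s < 1. -/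
open Real

private lemma amgm_lt (p q s : ℝ) (hp : 0 < p) (hq : 0 < q) (hpq : p ≠ q)
    (hs0 : 0 < s) (hs1 : s < 1) :
    p ^ (1 - s) * q ^ s < (1 - s) * p + s * q := by
  have hlog : Real.log p ≠ Real.log q := fun h => hpq (by
    rw [← Real.exp_log hp, ← Real.exp_log hq, h])
  have h := strictConvexOn_exp.2 (Set.mem_univ (Real.log p)) (Set.mem_univ (Real.log q))
    hlog (by linarith : (0:ℝ) < 1 - s) hs0 (by ring)
  have h1 : p ^ (1 - s) = Real.exp ((1 - s) * Real.log p) := by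
    rw [Real.rpow_def_of_pos hp]; ring_nf
  have h2 : q ^ s = Real.exp (s * Real.log q) := by
    rw [Real.rpow_def_of_pos hq]; ring_nf
  rw [h1, h2, ← Real.exp_add]
  simpa [Real.exp_log hp, Real.exp_log hq, smul_eq_mul] using h

set_option maxHeartbeats 1000000 in
private lemma key (q u v w s : ℝ) (hq0 : 0 < q) (hq1 : q < 1)
    (hu : 0 < u) (hv : 0 < v) (hw : 0 ≤ w) (hs0 : 0 < s) (hs1 : s < 1) :
    u + v * (q ^ s) ^ 2 + w * q ^ s
      < (u + v + w) ^ (1 - s) * (u + v * q ^ 2 + w * q) ^ s := by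
  have hs1' : (0:ℝ) < 1 - s := by linarith
  set A0 : ℝ := u + v + w with hA0def
  set A1 : ℝ := u + v * q ^ 2 + w * q with hA1def
  have hA0 : 0 < A0 := by positivity
  have hA1 : 0 < A1 := by positivity
  set T : ℝ := A0 ^ (1 - s) * A1 ^ s with hTdef
  have hT : 0 < T := by positivity
  -- generic rewriting of normalized terms
  have hrw : ∀ x y : ℝ, 0 ≤ x → 0 ≤ y →
      (x / A0) ^ (1 - s) * (y / A1) ^ s = (x ^ (1 - s) * y ^ s) / T := by
    intro x y hx hy
    rw [Real.div_rpow hx hA0.le, Real.div_rpow hy hA1.le, hTdef]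
    field_simp
  have term_le : ∀ x y : ℝ, 0 ≤ x → 0 ≤ y →
      x ^ (1 - s) * y ^ s ≤ ((1 - s) * (x / A0) + s * (y / A1)) * T := by
    intro x y hx hy
    have h := Real.geom_mean_le_arith_mean2_weighted (le_of_lt hs1') hs0.le
      (by positivity : (0:ℝ) ≤ x / A0) (by positivity : (0:ℝ) ≤ y / A1) (by ring)
    rw [hrw x y hx hy] at h
    calc x ^ (1 - s) * y ^ s = x ^ (1 - s) * y ^ s / T * T := by field_simp
      _ ≤ ((1 - s) * (x / A0) + s * (y / A1)) * T := by
          exact mul_le_mul_of_nonneg_right h hT.le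
  have term2_lt : v ^ (1 - s) * (v * q ^ 2) ^ s
      < ((1 - s) * (v / A0) + s * (v * q ^ 2 / A1)) * T := by
    have hne : v / A0 ≠ v * q ^ 2 / A1 := by
      intro h
      have h' : v * A1 = v * q ^ 2 * A0 := by
        field_simp at h
        rw [h]; ring
      have hA1gt : q ^ 2 * A0 < A1 := by
        rw [hA0def, hA1def]
        nlinarith [mul_pos hu (by nlinarith : (0:ℝ) < 1 - q ^ 2),
          mul_nonneg (mul_nonneg hw hq0.le) (by linarith : (0:ℝ) ≤ 1 - q)]
      nlinarith [mul_pos hv (sub_pos.mpr hA1gt)]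
    have h := amgm_lt (v / A0) (v * q ^ 2 / A1) s (by positivity) (by positivity) hne hs0 hs1
    rw [hrw v (v * q ^ 2) hv.le (by positivity)] at h
    calc v ^ (1 - s) * (v * q ^ 2) ^ s = v ^ (1 - s) * (v * q ^ 2) ^ s / T * T := by field_simp
      _ < ((1 - s) * (v / A0) + s * (v * q ^ 2 / A1)) * T := by
          exact mul_lt_mul_of_pos_right h hT
  -- identities expressing terms as x^(1-s) * y^s
  have hq2s : (q ^ 2) ^ s = (q ^ s) ^ 2 := by
    rw [← Real.rpow_natCast q 2, ← Real.rpow_natCast (q ^ s) 2,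
      ← Real.rpow_mul hq0.le, ← Real.rpow_mul hq0.le, mul_comm]
  have id1 : u = u ^ (1 - s) * u ^ s := by
    rw [← Real.rpow_add hu]; norm_num
  have id2 : v * (q ^ s) ^ 2 = v ^ (1 - s) * (v * q ^ 2) ^ s := by
    rw [Real.mul_rpow hv.le (by positivity), hq2s, ← mul_assoc, ← Real.rpow_add hv]
    norm_num
  have id3 : w * q ^ s = w ^ (1 - s) * (w * q) ^ s := by
    rcases hw.eq_or_lt with h0 | h0
    · rw [← h0]
      rw [Real.zero_rpow (by linarith : 1 - s ≠ 0)]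
      simp
    · rw [Real.mul_rpow h0.le hq0.le, ← mul_assoc, ← Real.rpow_add h0]
      norm_num
  have sum_eq : ((1 - s) * (u / A0) + s * (u / A1)) * T
      + ((1 - s) * (v / A0) + s * (v * q ^ 2 / A1)) * T
      + ((1 - s) * (w / A0) + s * (w * q / A1)) * T = T := by
    have : (1 - s) * (u / A0) + s * (u / A1)
        + ((1 - s) * (v / A0) + s * (v * q ^ 2 / A1))
        + ((1 - s) * (w / A0) + s * (w * q / A1)) = 1 := by
      field_simp
      ring
    rw [← add_mul, ← add_mul, this, one_mul]
  calc u + v * (q ^ s) ^ 2 + w * q ^ s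
      = u ^ (1 - s) * u ^ s + v ^ (1 - s) * (v * q ^ 2) ^ s + w ^ (1 - s) * (w * q) ^ s := by
        rw [← id1, ← id2, ← id3]
    _ < ((1 - s) * (u / A0) + s * (u / A1)) * T
        + ((1 - s) * (v / A0) + s * (v * q ^ 2 / A1)) * T
        + ((1 - s) * (w / A0) + s * (w * q / A1)) * T := by
        have h1 := term_le u u hu.le hu.le
        have h3 := term_le w (w * q) hw (by positivity)
        linarith [term2_lt]
    _ = T := sum_eq

/-- Let `b ≥ 2` be an integer, `c > 0`, and define on `[0,1]`
`f(s) = b^s · (1+(b−1)e^{−c})^{−s} · ((1+(b−1)e^{−c(1−s)})(1+(b−1)e^{−cs})²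
          + (b−1)(1−e^{−c(1−s)})(1−e^{−cs})²)`.
Then `f(0) = f(1) = b²·(1+(b−1)e^{−c})` and `f(s) < b²·(1+(b−1)e^{−c})` for `0 < s < 1`. -/
theorem boundary_max_of_convex_combination (b : ℕ) (hb : 2 ≤ b) (c : ℝ) (hc : 0 < c)
    (f : ℝ → ℝ)
    (hf : ∀ s : ℝ, f s =
      (b : ℝ) ^ s * (1 + ((b : ℝ) - 1) * Real.exp (-c)) ^ (-s) *
        ((1 + ((b : ℝ) - 1) * Real.exp (-(c * (1 - s)))) *
            (1 + ((b : ℝ) - 1) * Real.exp (-(c * s))) ^ 2 +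
          ((b : ℝ) - 1) * (1 - Real.exp (-(c * (1 - s)))) *
            (1 - Real.exp (-(c * s))) ^ 2)) :
    f 0 = (b : ℝ) ^ 2 * (1 + ((b : ℝ) - 1) * Real.exp (-c)) ∧
    f 1 = (b : ℝ) ^ 2 * (1 + ((b : ℝ) - 1) * Real.exp (-c)) ∧
    ∀ s : ℝ, 0 < s → s < 1 →
      f s < (b : ℝ) ^ 2 * (1 + ((b : ℝ) - 1) * Real.exp (-c)) := by
  set B : ℝ := (b : ℝ) - 1 with hBdef
  have hB : 1 ≤ B := by
    have : (2:ℝ) ≤ (b:ℝ) := by exact_mod_cast hb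
    simp [hBdef]; linarith
  have hbpos : (0:ℝ) < (b:ℝ) := by linarith
  set q : ℝ := Real.exp (-c) with hqdef
  have hq0 : 0 < q := Real.exp_pos _
  have hq1 : q < 1 := by
    rw [hqdef]
    exact Real.exp_lt_one_iff.mpr (by linarith)
  set A : ℝ := 1 + B * q with hAdef
  have hA : 0 < A := by positivity
  refine ⟨?_, ?_, ?_⟩
  · rw [hf 0]
    simp only [mul_zero, sub_zero, mul_one, neg_zero, Real.rpow_zero, Real.exp_zero]
    ring
  · rw [hf 1]
    have h1 : (b:ℝ) ^ (1:ℝ) = (b:ℝ) := Real.rpow_one _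
    have h2 : ((1:ℝ) + B * q) ^ (-(1:ℝ)) = (1 + B * q)⁻¹ := by
      rw [Real.rpow_neg_one]
    simp only [mul_one, sub_self, mul_zero, neg_zero, Real.exp_zero, h1, h2]
    rw [← hqdef, hAdef]
    rw [Real.rpow_neg_one]
    field_simp
    ring
  · intro s hs0 hs1
    rw [hf s]
    set X : ℝ := Real.exp (-(c * s)) with hXdef
    set Y : ℝ := Real.exp (-(c * (1 - s))) with hYdef
    have hXY : X * Y = q := by
      rw [hXdef, hYdef, hqdef, ← Real.exp_add]
      ring_nf
    have hXq : X = q ^ s := by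
      rw [hqdef, hXdef, ← Real.exp_mul]
      ring_nf
    have hX0 : 0 < X := Real.exp_pos _
    -- algebraic identity
    have hE : (1 + B * Y) * (1 + B * X) ^ 2 + B * (1 - Y) * (1 - X) ^ 2
        = (B + 1) * ((1 + 2 * B * q) + B * X ^ 2 + B * (B - 1) * q * X) := by
      linear_combination (2 * B * (B + 1) + B * (B - 1) * (B + 1) * X) * hXY
    have hb1 : (b:ℝ) = B + 1 := by rw [hBdef]; ring
    have hkey := key q (1 + 2 * B * q) B (B * (B - 1) * q) s hq0 hq1
      (by positivity) (by linarith)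
      (mul_nonneg (mul_nonneg (by linarith : (0:ℝ) ≤ B) (by linarith : (0:ℝ) ≤ B - 1)) hq0.le)
      hs0 hs1
    have hA0 : (1 + 2 * B * q) + B + B * (B - 1) * q = (B + 1) * A := by
      rw [hAdef]; ring
    have hA1 : (1 + 2 * B * q) + B * q ^ 2 + B * (B - 1) * q * q = A ^ 2 := by
      rw [hAdef]; ring
    rw [hA0, hA1] at hkey
    -- multiply by the positive prefactor
    have hpre : 0 < (b:ℝ) ^ s * A ^ (-s) := by positivity
    have hstep : (b:ℝ) ^ s * A ^ (-s) *
        ((1 + B * Y) * (1 + B * X) ^ 2 + B * (1 - Y) * (1 - X) ^ 2)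
        < (b:ℝ) ^ s * A ^ (-s) * ((B + 1) * (((B + 1) * A) ^ (1 - s) * (A ^ 2) ^ s)) := by
      rw [hE]
      apply mul_lt_mul_of_pos_left _ hpre
      apply mul_lt_mul_of_pos_left _ (by linarith : (0:ℝ) < B + 1)
      rw [hXq]
      exact hkey
    refine lt_of_lt_of_eq hstep ?_
    -- show RHS equals b^2 * A
    have e2 : (A ^ 2) ^ s = A ^ (2 * s) := by
      rw [← Real.rpow_natCast A 2, ← Real.rpow_mul hA.le]
      norm_num
    rw [Real.mul_rpow (by linarith : (0:ℝ) ≤ B + 1) hA.le, e2, ← hb1]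
    have eb : (b:ℝ) ^ s * (b:ℝ) ^ (1 - s) = (b:ℝ) := by
      rw [← Real.rpow_add hbpos]; norm_num
    have eA : A ^ (-s) * (A ^ (1 - s) * A ^ (2 * s)) = A := by
      rw [← Real.rpow_add hA, ← Real.rpow_add hA,
        show -s + (1 - s + 2 * s) = 1 by ring, Real.rpow_one]
    calc (b:ℝ) ^ s * A ^ (-s) * ((b:ℝ) * ((b:ℝ) ^ (1 - s) * A ^ (1 - s) * A ^ (2 * s)))
        = ((b:ℝ) ^ s * (b:ℝ) ^ (1 - s)) * (A ^ (-s) * (A ^ (1 - s) * A ^ (2 * s))) * (b:ℝ) := by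
          ring
      _ = (b:ℝ) ^ 2 * A := by rw [eb, eA]; ring
end

section
/- Let b ≥ 2 be an integer and let A, B, B' be real constants with 0 < A < B < B'. Then there exist constants L₃ > 0, C > 0 and D ∈ ℕ such that for all d ≥ D and all natural numbers m with m ≤ d/L₃, the double sum ∑_{ℓ=0}^{⌊d/L₃⌋} (A/B)^ℓ · C(d, ℓ)^(−1) · ∑_{i} C(m, i) · C(d−m, i+ℓ−m) · (B·(b−1+B')/(b−1))^(m−i) is at most C, where the inner sum ranges over natural numbers i with i ≤ m and i + ℓ ≥ m. -/
private lemma choose_ratio_le (d ℓ : ℕ) (hld : ℓ ≤ d) : ∀ j ≤ ℓ,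
    (d.choose (ℓ - j) : ℝ) ≤ (d.choose ℓ : ℝ) * ((ℓ : ℝ) / ((d : ℝ) - ℓ + 1)) ^ j := by
  intro j
  induction j with
  | zero => simp
  | succ j ih =>
    intro hj
    have hj' : j ≤ ℓ := Nat.le_of_succ_le hj
    have ih' := ih hj'
    set q : ℝ := (ℓ : ℝ) / ((d : ℝ) - ℓ + 1) with hq
    have hden : (0:ℝ) < (d : ℝ) - ℓ + 1 := by
      have : (ℓ:ℝ) ≤ d := Nat.cast_le.mpr hld
      linarith
    have hq0 : 0 ≤ q := div_nonneg (Nat.cast_nonneg _) hden.le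
    have hk : ℓ - (j + 1) + 1 = ℓ - j := by omega
    have id1 := Nat.choose_succ_right_eq d (ℓ - (j+1))
    rw [hk] at id1
    have key : (d.choose (ℓ - (j+1)) : ℝ) =
        (d.choose (ℓ - j) : ℝ) * ((ℓ:ℝ) - j) / ((d:ℝ) - ((ℓ - (j+1) : ℕ):ℝ)) := by
      have h1 : ((d - (ℓ - (j+1)) : ℕ) : ℝ) = (d:ℝ) - ((ℓ - (j+1) : ℕ):ℝ) := by
        have h : ℓ - (j+1) ≤ d := by omega
        push_cast [h]; ring
      have h2 : ((ℓ - j : ℕ) : ℝ) = (ℓ:ℝ) - j := by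
        push_cast [hj']; ring
      have hcast : (d.choose (ℓ - j) : ℝ) * ((ℓ - j : ℕ):ℝ)
          = (d.choose (ℓ - (j+1)) : ℝ) * ((d - (ℓ - (j+1)) : ℕ):ℝ) := by
        exact_mod_cast congrArg (Nat.cast (R := ℝ)) id1
      rw [h1, h2] at hcast
      have hdk' : (0:ℝ) < (d:ℝ) - ((ℓ - (j+1) : ℕ):ℝ) := by
        have : ((ℓ - (j+1) : ℕ):ℝ) < d := by exact_mod_cast (by omega : ℓ - (j+1) < d)
        linarith
      rw [eq_div_iff hdk'.ne']
      linarith [hcast]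
    have hc1 : ((ℓ - (j+1) : ℕ):ℝ) = (ℓ:ℝ) - j - 1 := by push_cast [hj]; ring
    rw [key, hc1]
    have hjl : (j:ℝ) < ℓ := by exact_mod_cast hj
    have hfrac : ((ℓ:ℝ) - j) / ((d:ℝ) - ((ℓ:ℝ) - j - 1)) ≤ q := by
      rw [hq]
      apply div_le_div₀ (Nat.cast_nonneg _) (by linarith) hden (by linarith)
    rw [mul_div_assoc, pow_succ, ← mul_assoc]
    exact mul_le_mul ih' hfrac
      (div_nonneg (by linarith) (by linarith)) (by positivity)

/-- Let `b ≥ 2` be an integer and `0 < A < B < B'`. There exist `L₃ > 0`, `C > 0` and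
`D ∈ ℕ` such that for all `d ≥ D` and all `m ≤ d/L₃`,
`∑_{ℓ=0}^{⌊d/L₃⌋} (A/B)^ℓ · C(d,ℓ)⁻¹ · ∑_{i ≤ m, i+ℓ ≥ m} C(m,i)·C(d−m, i+ℓ−m)·(B(b−1+B')/(b−1))^{m−i} ≤ C`. -/
theorem binomial_exponential_sum_bounded (b : ℕ) (hb : 2 ≤ b)
    (A B B' : ℝ) (hA : 0 < A) (hAB : A < B) (hBB' : B < B') :
    ∃ L₃ C : ℝ, 0 < L₃ ∧ 0 < C ∧ ∃ D : ℕ,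
      ∀ d ≥ D, ∀ m : ℕ, (m : ℝ) ≤ (d : ℝ) / L₃ →
        (∑ ℓ ∈ Finset.range (⌊(d : ℝ) / L₃⌋₊ + 1),
            (A / B) ^ ℓ * ((d.choose ℓ : ℝ))⁻¹ *
              ∑ i ∈ Finset.range (m + 1),
                if m ≤ i + ℓ then
                  (m.choose i : ℝ) * ((d - m).choose (i + ℓ - m) : ℝ) *
                    (B * ((b : ℝ) - 1 + B') / ((b : ℝ) - 1)) ^ (m - i)
                else 0) ≤ C := by
  have hB : 0 < B := hA.trans hAB
  have hb2 : (2:ℝ) ≤ (b:ℝ) := by exact_mod_cast hb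
  have hb1 : (1:ℝ) ≤ (b:ℝ) - 1 := by linarith
  set K : ℝ := B * ((b : ℝ) - 1 + B') / ((b : ℝ) - 1) with hKdef
  have hK : 0 < K := div_pos (mul_pos hB (by linarith)) (by linarith)
  set c : ℝ := Real.log (B / A) with hcdef
  have hc : 0 < c := Real.log_pos (by rw [lt_div_iff₀ hA]; linarith)
  set L : ℝ := 1 + 2 * K / c with hLdef
  have hL1 : 1 < L := by
    rw [hLdef]
    have : 0 < 2 * K / c := by positivity
    linarith
  set ρ : ℝ := Real.exp (-(c/2)) with hρdef
  have hρ0 : 0 < ρ := Real.exp_pos _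
  have hρ1 : ρ < 1 := Real.exp_lt_one_iff.mpr (by linarith)
  have hAB' : A / B = Real.exp (-c) := by
    rw [hcdef, ← Real.log_inv, Real.exp_log (by positivity), inv_div]
  refine ⟨L, (1 - ρ)⁻¹, by linarith, inv_pos.mpr (by linarith), 0, ?_⟩
  intro d _ m hm
  set N := ⌊(d:ℝ) / L⌋₊ with hN
  have hNd : (N : ℝ) ≤ (d:ℝ) / L := Nat.floor_le (by positivity)
  have hNd' : N ≤ d := by
    rw [hN]
    calc ⌊(d:ℝ)/L⌋₊ ≤ ⌊(d:ℝ)⌋₊ :=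
          Nat.floor_mono (div_le_self (Nat.cast_nonneg _) hL1.le)
      _ = d := Nat.floor_natCast d
  have key : ∀ ℓ ∈ Finset.range (N + 1),
      (A / B) ^ ℓ * ((d.choose ℓ : ℝ))⁻¹ *
        (∑ i ∈ Finset.range (m + 1),
          if m ≤ i + ℓ then
            (m.choose i : ℝ) * ((d - m).choose (i + ℓ - m) : ℝ) * K ^ (m - i)
          else 0) ≤ ρ ^ ℓ := by
    intro ℓ hℓ
    have hℓN : ℓ ≤ N := Nat.lt_succ_iff.mp (Finset.mem_range.mp hℓ)
    have hld : ℓ ≤ d := hℓN.trans hNd'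
    have hℓr : (ℓ:ℝ) ≤ (d:ℝ) / L := le_trans (Nat.cast_le.mpr hℓN) hNd
    set q : ℝ := (ℓ : ℝ) / ((d : ℝ) - ℓ + 1) with hq
    have hden : (0:ℝ) < (d : ℝ) - ℓ + 1 := by
      have : (ℓ:ℝ) ≤ d := Nat.cast_le.mpr hld
      linarith
    have hq0 : 0 ≤ q := div_nonneg (Nat.cast_nonneg _) hden.le
    have hpos : (0:ℝ) < d.choose ℓ := by
      exact_mod_cast Nat.choose_pos hld
    -- inner sum bound
    have inner : (∑ i ∈ Finset.range (m + 1),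
        if m ≤ i + ℓ then
          (m.choose i : ℝ) * ((d - m).choose (i + ℓ - m) : ℝ) * K ^ (m - i)
        else 0) ≤ (d.choose ℓ : ℝ) * (1 + q * K) ^ m := by
      have expand : (d.choose ℓ : ℝ) * (1 + q * K) ^ m =
          ∑ i ∈ Finset.range (m + 1),
            (d.choose ℓ : ℝ) * ((1:ℝ) ^ i * (q * K) ^ (m - i) * (m.choose i : ℝ)) := by
        rw [← Finset.mul_sum, ← add_pow]
      rw [expand]
      apply Finset.sum_le_sum
      intro i hi
      have him : i ≤ m := Nat.lt_succ_iff.mp (Finset.mem_range.mp hi)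
      by_cases hcond : m ≤ i + ℓ
      · rw [if_pos hcond]
        have hji : m - i ≤ ℓ := by omega
        have heq : i + ℓ - m = ℓ - (m - i) := by omega
        have step1 : ((d - m).choose (i + ℓ - m) : ℝ) ≤ (d.choose (ℓ - (m - i)) : ℝ) := by
          rw [heq]
          exact_mod_cast Nat.choose_le_choose _ (Nat.sub_le d m)
        have step2 := choose_ratio_le d ℓ hld (m - i) hji
        have : ((d - m).choose (i + ℓ - m) : ℝ) ≤ (d.choose ℓ : ℝ) * q ^ (m - i) :=
          step1.trans step2
        calc (m.choose i : ℝ) * ((d - m).choose (i + ℓ - m) : ℝ) * K ^ (m - i)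
            ≤ (m.choose i : ℝ) * ((d.choose ℓ : ℝ) * q ^ (m - i)) * K ^ (m - i) := by
              apply mul_le_mul_of_nonneg_right
                (mul_le_mul_of_nonneg_left this (Nat.cast_nonneg _)) (by positivity)
          _ = (d.choose ℓ : ℝ) * ((1:ℝ) ^ i * (q * K) ^ (m - i) * (m.choose i : ℝ)) := by
              rw [one_pow, mul_pow]; ring
      · rw [if_neg hcond]
        positivity
    -- combine
    have hqKm : q * K * m ≤ (ℓ:ℝ) * (c / 2) := by
      have h1 : K * m ≤ (c / 2) * ((d:ℝ) - ℓ + 1) := by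
        have hm' : K * m ≤ K * ((d:ℝ) / L) :=
          mul_le_mul_of_nonneg_left hm hK.le
        have h2 : (c / 2) * ((d:ℝ) - (d:ℝ)/L) = K * ((d:ℝ)/L) * ((L - 1) * c / (2 * K)) := by
          field_simp
        have h3 : (L - 1) * c / (2 * K) = 1 := by
          rw [hLdef]
          field_simp
          ring
        have h4 : (c/2) * ((d:ℝ) - (d:ℝ)/L) = K * ((d:ℝ)/L) := by rw [h2, h3, mul_one]
        have h5 : (d:ℝ) - (d:ℝ)/L ≤ (d:ℝ) - ℓ + 1 := by linarith
        nlinarith [mul_le_mul_of_nonneg_left h5 (by linarith : (0:ℝ) ≤ c/2)]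
      calc q * K * m = (ℓ:ℝ) * ((K * m) / ((d:ℝ) - ℓ + 1)) := by
            rw [hq]; field_simp
        _ ≤ (ℓ:ℝ) * (c / 2) := by
            apply mul_le_mul_of_nonneg_left _ (Nat.cast_nonneg _)
            rw [div_le_iff₀ hden]
            linarith [h1]
    have pow_bound : (1 + q * K) ^ m ≤ Real.exp ((ℓ:ℝ) * (c/2)) := by
      calc (1 + q * K) ^ m ≤ Real.exp (q * K) ^ m := by
            apply pow_le_pow_left₀ (by positivity)
            linarith [Real.add_one_le_exp (q * K)]
        _ = Real.exp (q * K * m) := by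
            rw [← Real.exp_nat_mul]; ring_nf
        _ ≤ Real.exp ((ℓ:ℝ) * (c/2)) := Real.exp_le_exp.mpr hqKm
    calc (A / B) ^ ℓ * ((d.choose ℓ : ℝ))⁻¹ *
          (∑ i ∈ Finset.range (m + 1),
            if m ≤ i + ℓ then
              (m.choose i : ℝ) * ((d - m).choose (i + ℓ - m) : ℝ) * K ^ (m - i)
            else 0)
        ≤ (A / B) ^ ℓ * ((d.choose ℓ : ℝ))⁻¹ * ((d.choose ℓ : ℝ) * (1 + q * K) ^ m) := by
          apply mul_le_mul_of_nonneg_left inner (by positivity)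
      _ = (A / B) ^ ℓ * (1 + q * K) ^ m := by
          field_simp
      _ ≤ (A / B) ^ ℓ * Real.exp ((ℓ:ℝ) * (c/2)) := by
          apply mul_le_mul_of_nonneg_left pow_bound (by positivity)
      _ = ρ ^ ℓ := by
          rw [hAB', ← Real.exp_nat_mul, ← Real.exp_add, hρdef, ← Real.exp_nat_mul]
          congr 1
          ring
  calc (∑ ℓ ∈ Finset.range (N + 1),
        (A / B) ^ ℓ * ((d.choose ℓ : ℝ))⁻¹ *
          ∑ i ∈ Finset.range (m + 1),
            if m ≤ i + ℓ then
              (m.choose i : ℝ) * ((d - m).choose (i + ℓ - m) : ℝ) * K ^ (m - i)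
            else 0)
      ≤ ∑ ℓ ∈ Finset.range (N + 1), ρ ^ ℓ := Finset.sum_le_sum key
    _ ≤ ∑' ℓ : ℕ, ρ ^ ℓ :=
        Summable.sum_le_tsum _ (fun i _ => by positivity)
          (summable_geometric_of_lt_one hρ0.le hρ1)
    _ = (1 - ρ)⁻¹ := tsum_geometric_of_lt_one hρ0.le hρ1
end
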